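/- arXiv:2604.21049 — 2 statements merged into one kernel-verified Lean document; each statement's English description precedes it below -/
import Mathlib

section
/- Let (Ω, τ) be a Hausdorff space and μ₁, μ₂ non-negative Radon L^0-valued measures on Ω. If 𝔅 is a basis for τ closed under finite intersections and μ₁(U) = μ₂(U) for every U ∈ 𝔅, then μ₁ = μ₂. -/
open Filter Set Topology Function
open MeasureTheory (Measure IsProbabilityMeasure)

noncomputable section

namespace RNMPaper

variable {X : Type*} [MeasurableSpace X]

/-- The canonical distance on `L⁰(m)`, `d(f,g) = ∫ |f-g| ∧ 1 dm`. -/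
def dL0 (m : Measure X) (f g : X →ₘ[m] ℝ) : ℝ := ∫ x, min |f x - g x| 1 ∂m

/-- Convergence of a sequence in `L⁰(m)` (i.e. convergence in measure). -/
def TendstoL0 (m : Measure X) (f : ℕ → X →ₘ[m] ℝ) (g : X →ₘ[m] ℝ) : Prop :=
  Tendsto (fun n => dL0 m (f n) g) atTop (𝓝 0)

/-- `S` is the sum of the (nonnegative) sequence `f` in `L⁰(m)`: the least upper bound
of the partial sums. -/
def HasL0Sum (m : Measure X) (f : ℕ → X →ₘ[m] ℝ) (S : X →ₘ[m] ℝ) : Prop :=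
  IsLUB (Set.range fun n => ∑ i ∈ Finset.range n, f i) S

/-- A random normed module with base probability space `(X, Σ, m)`: an `L⁰(m)`-module
with an `L⁰`-norm. -/
structure RNMod (m : Measure X) where
  M : Type*
  [grp : AddCommGroup M]
  smul : (X →ₘ[m] ℝ) → M → M
  nrm : M → X →ₘ[m] ℝ
  smul_add : ∀ f v w, smul f (v + w) = smul f v + smul f w
  add_smul : ∀ f g v, smul (f + g) v = smul f v + smul g v
  one_smul : ∀ v, smul 1 v = v
  mul_smul : ∀ f g v, smul (f * g) v = smul f (smul g v)
  nrm_nonneg : ∀ v, 0 ≤ nrm v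
  nrm_eq_zero : ∀ v, nrm v = 0 ↔ v = 0
  nrm_add_le : ∀ v w, nrm (v + w) ≤ nrm v + nrm w
  nrm_smul : ∀ f v, nrm (smul f v) = |f| * nrm v

attribute [instance] RNMod.grp

/-- The distance on a random normed module. -/
def RNMod.dist {m : Measure X} (R : RNMod m) (v w : R.M) : ℝ := dL0 m (R.nrm (v - w)) 0

/-- Completeness of a random normed module: every Cauchy sequence converges. -/
def RNMod.Complete {m : Measure X} (R : RNMod m) : Prop :=
  ∀ v : ℕ → R.M, (∀ ε > (0:ℝ), ∃ N, ∀ p ≥ N, ∀ q ≥ N, R.dist (v p) (v q) < ε) →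
    ∃ w : R.M, Tendsto (fun n => R.dist (v n) w) atTop (𝓝 0)

variable {Ω : Type*}

/-- An `L⁰(m)`-valued measure on the measurable space `Ω` (the values on non-measurable
sets are irrelevant): `μ ∅ = 0` and, for every sequence of pairwise disjoint measurable
sets, the norms `|μ (A n)|` are summable (partial sums order bounded) and the finite
partial sums of `μ (A n)` converge (as a net over finite subsets, in the metric of
`L⁰(m)`) to `μ (⋃ n, A n)`. -/
structure L0Measure (m : Measure X) (Ω : Type*) [MeasurableSpace Ω] where
  toFun : Set Ω → X →ₘ[m] ℝ
  empty' : toFun ∅ = 0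
  summable' : ∀ A : ℕ → Set Ω, (∀ n, MeasurableSet (A n)) → Pairwise (Disjoint on A) →
    BddAbove (Set.range fun n => ∑ i ∈ Finset.range n, |toFun (A i)|)
  additive' : ∀ A : ℕ → Set Ω, (∀ n, MeasurableSet (A n)) → Pairwise (Disjoint on A) →
    Tendsto (fun F : Finset ℕ => dL0 m (∑ i ∈ F, toFun (A i)) (toFun (⋃ n, A n)))
      atTop (𝓝 0)

/-- The collection of all sums `∑ₙ |μ (B n)|` over countable measurable partitions
`(B n)` of `A` (those sums that exist in `L⁰(m)`, as least upper bounds of partial sums). -/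
def partitionSums (m : Measure X) [MeasurableSpace Ω] (μ : Set Ω → X →ₘ[m] ℝ) (A : Set Ω) :
    Set (X →ₘ[m] ℝ) :=
  {g | ∃ B : ℕ → Set Ω, (∀ n, MeasurableSet (B n)) ∧ Pairwise (Disjoint on B) ∧
    (⋃ n, B n) = A ∧ HasL0Sum m (fun n => |μ (B n)|) g}

/-- `t` is the total variation `|μ|(A)` of `μ` on `A`: `t` dominates all partial sums over
all countable measurable partitions of `A` (so each partition sum exists in `L⁰(m)` and is
`≤ t`), and `t` is the least upper bound of the set of partition sums. -/
def HasTV (m : Measure X) [MeasurableSpace Ω] (μ : Set Ω → X →ₘ[m] ℝ) (A : Set Ω)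
    (t : X →ₘ[m] ℝ) : Prop :=
  (∀ B : ℕ → Set Ω, (∀ n, MeasurableSet (B n)) → Pairwise (Disjoint on B) →
    (⋃ n, B n) = A → ∀ n, ∑ i ∈ Finset.range n, |μ (B i)| ≤ t) ∧
  IsLUB (partitionSums m μ A) t

/-- An `L⁰(m)`-valued measure of bounded variation, bundled together with its total
variation `L⁰`-valued measure `tv = |μ|`. -/
structure BVMeasure (m : Measure X) (Ω : Type*) [MeasurableSpace Ω] extends L0Measure m Ω where
  tv : Set Ω → X →ₘ[m] ℝ
  htv : ∀ A, MeasurableSet A → HasTV m toFun A (tv A)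


variable {Ωt : Type*} [TopologicalSpace Ωt] [MeasurableSpace Ωt]

/-- Inner regularity of the total variation on open sets by compact sets:
`|μ|(U) = ⋁ {|μ|(K) : K compact, K ⊆ U}` for every open `U`. -/
def InnerRegularOnOpens (m : Measure X) (μ : BVMeasure m Ωt) : Prop :=
  ∀ U : Set Ωt, IsOpen U →
    IsLUB {g | ∃ K : Set Ωt, IsCompact K ∧ K ⊆ U ∧ g = μ.tv K} (μ.tv U)

/-- Outer regularity of the total variation on Borel sets by open sets:
`|μ|(B) = ⋀ {|μ|(U) : U open, B ⊆ U}` for every Borel `B`. -/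
def OuterRegularBorel (m : Measure X) (μ : BVMeasure m Ωt) : Prop :=
  ∀ B : Set Ωt, MeasurableSet B →
    IsGLB {g | ∃ U : Set Ωt, IsOpen U ∧ B ⊆ U ∧ g = μ.tv U} (μ.tv B)

/-- Inner regularity of the total variation on all Borel sets by compact sets. -/
def InnerRegularBorel (m : Measure X) (μ : BVMeasure m Ωt) : Prop :=
  ∀ B : Set Ωt, MeasurableSet B →
    IsLUB {g | ∃ K : Set Ωt, IsCompact K ∧ K ⊆ B ∧ g = μ.tv K} (μ.tv B)

/-- A Borel `L⁰`-valued measure of bounded variation is Radon if its total variation is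
inner regular on open sets by compact sets and outer regular on Borel sets by open sets. -/
def IsRadonL0 (m : Measure X) (μ : BVMeasure m Ωt) : Prop :=
  InnerRegularOnOpens m μ ∧ OuterRegularBorel m μ


section Aux

open MeasureTheory

variable {X : Type*} [MeasurableSpace X] {m : Measure X}

instance : AddLeftMono (X →ₘ[m] ℝ) := ⟨by
  intro h f g hfg
  rw [← AEEqFun.coeFn_le] at hfg ⊢
  filter_upwards [hfg, AEEqFun.coeFn_add h f, AEEqFun.coeFn_add h g] with x h1 h2 h3
  rw [h2, h3]
  exact add_le_add_right h1 _⟩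

instance : AddRightMono (X →ₘ[m] ℝ) :=
  ⟨fun h a b hab => by
    simp only [Function.swap, add_comm _ h]
    exact add_le_add_right hab h⟩

lemma aefun_abs_of_nonneg {f : X →ₘ[m] ℝ} (h : 0 ≤ f) : |f| = f := by
  apply AEEqFun.ext
  filter_upwards [AEEqFun.coeFn_abs f, AEEqFun.coeFn_le.2 h,
    AEEqFun.coeFn_zero (β := ℝ) (μ := m)] with x h1 h2 h3
  rw [h1]
  refine abs_of_nonneg ?_
  rw [h3] at h2
  simpa using h2

lemma dL0_eq_zero [IsProbabilityMeasure m] {f g : X →ₘ[m] ℝ}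
    (h : dL0 m f g = 0) : f = g := by
  have hmeas : AEStronglyMeasurable (fun x => min |f x - g x| 1) m :=
    (continuous_abs.min continuous_const).comp_aestronglyMeasurable
      (f.aestronglyMeasurable.sub g.aestronglyMeasurable)
  have hint : Integrable (fun x => min |f x - g x| 1) m := by
    refine Integrable.mono' (integrable_const (1 : ℝ)) hmeas ?_
    filter_upwards with x
    rw [Real.norm_eq_abs, abs_of_nonneg (le_min (abs_nonneg _) zero_le_one)]
    exact min_le_right _ _
  have h' : ∫ x, min |f x - g x| 1 ∂m = 0 := h
  have h0 := (integral_eq_zero_iff_of_nonneg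
    (fun x => le_min (abs_nonneg _) zero_le_one) hint).1 h'
  apply AEEqFun.ext
  filter_upwards [h0] with x hx
  simp only [Pi.zero_apply] at hx
  rcases le_total |f x - g x| 1 with hle | hle
  · rw [min_eq_left hle] at hx
    exact sub_eq_zero.1 (abs_eq_zero.1 hx)
  · rw [min_eq_right hle] at hx
    norm_num at hx

variable {Ω : Type*} [MeasurableSpace Ω]

lemma L0Measure.finAdd [IsProbabilityMeasure m] (μ : L0Measure m Ω) {A B : Set Ω}
    (hA : MeasurableSet A) (hB : MeasurableSet B) (hd : Disjoint A B) :
    μ.toFun (A ∪ B) = μ.toFun A + μ.toFun B := by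
  classical
  set C : ℕ → Set Ω := fun n => if n = 0 then A else if n = 1 then B else ∅ with hC
  have hmeas : ∀ n, MeasurableSet (C n) := by
    intro n
    simp only [hC]
    split_ifs <;> first | exact hA | exact hB | exact MeasurableSet.empty
  have hdisj : Pairwise (Disjoint on C) := by
    intro i j hij
    simp only [Function.onFun, hC]
    split_ifs <;> simp_all [hd, hd.symm]
  have hUnion : (⋃ n, C n) = A ∪ B := by
    ext x
    simp only [Set.mem_iUnion, Set.mem_union, hC]
    constructor
    · rintro ⟨n, hn⟩
      split_ifs at hn with h1 h2
      · exact Or.inl hn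
      · exact Or.inr hn
      · exact absurd hn (Set.notMem_empty x)
    · rintro (h | h)
      · exact ⟨0, by simp [h]⟩
      · exact ⟨1, by simp [h]⟩
  have htend := μ.additive' C hmeas hdisj
  rw [hUnion] at htend
  have hev : (fun F : Finset ℕ => dL0 m (∑ i ∈ F, μ.toFun (C i)) (μ.toFun (A ∪ B)))
      =ᶠ[atTop] (fun _ => dL0 m (μ.toFun A + μ.toFun B) (μ.toFun (A ∪ B))) := by
    filter_upwards [Filter.eventually_ge_atTop ({0, 1} : Finset ℕ)] with F hF
    have hzero : ∀ i ∈ F, i ∉ ({0, 1} : Finset ℕ) → μ.toFun (C i) = 0 := by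
      intro i _ hi
      have h0 : i ≠ 0 := by rintro rfl; exact hi (by simp)
      have h1 : i ≠ 1 := by rintro rfl; exact hi (by simp)
      simp [hC, h0, h1, μ.empty']
    have hsum : ∑ i ∈ F, μ.toFun (C i) = μ.toFun A + μ.toFun B := by
      rw [← Finset.sum_subset hF hzero, Finset.sum_pair (by norm_num : (0 : ℕ) ≠ 1)]
      simp [hC]
    rw [hsum]
  have hconst : Tendsto (fun _ : Finset ℕ =>
      dL0 m (μ.toFun A + μ.toFun B) (μ.toFun (A ∪ B))) atTop (𝓝 0) := htend.congr' hev
  have hz := tendsto_nhds_unique hconst tendsto_const_nhds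
  exact (dL0_eq_zero hz.symm).symm

lemma L0Measure.finAddN [IsProbabilityMeasure m] (μ : L0Measure m Ω) (B : ℕ → Set Ω)
    (hmeas : ∀ n, MeasurableSet (B n)) (hdisj : Pairwise (Disjoint on B)) (n : ℕ) :
    μ.toFun (⋃ i ∈ Finset.range n, B i) = ∑ i ∈ Finset.range n, μ.toFun (B i) := by
  induction n with
  | zero => simp [μ.empty']
  | succ n ih =>
    have hdisjn : Disjoint (B n) (⋃ i ∈ Finset.range n, B i) := by
      rw [Set.disjoint_right]
      intro x hx hxn
      rcases Set.mem_iUnion₂.mp hx with ⟨i, hi, hxi⟩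
      exact Set.disjoint_left.1 (hdisj (Nat.ne_of_lt (Finset.mem_range.1 hi))) hxi hxn
    rw [Finset.sum_range_succ, Finset.range_add_one, Finset.set_biUnion_insert,
      μ.finAdd (hmeas n) (Finset.measurableSet_biUnion _ (fun i _ => hmeas i)) hdisjn,
      ih]
    exact add_comm _ _

lemma L0Measure.mono [IsProbabilityMeasure m] (μ : L0Measure m Ω)
    (hpos : ∀ A : Set Ω, MeasurableSet A → 0 ≤ μ.toFun A)
    {A B : Set Ω} (hA : MeasurableSet A) (hB : MeasurableSet B) (hsub : A ⊆ B) :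
    μ.toFun A ≤ μ.toFun B := by
  have : μ.toFun B = μ.toFun A + μ.toFun (B \ A) := by
    rw [← μ.finAdd hA (hB.diff hA) disjoint_sdiff_right, Set.union_diff_cancel hsub]
  rw [this]
  exact le_add_of_nonneg_right (hpos _ (hB.diff hA))

lemma L0Measure.inclExcl [IsProbabilityMeasure m] (μ : L0Measure m Ω)
    {A B : Set Ω} (hA : MeasurableSet A) (hB : MeasurableSet B) :
    μ.toFun (A ∪ B) + μ.toFun (A ∩ B) = μ.toFun A + μ.toFun B := by
  have h1 : μ.toFun (A ∪ B) = μ.toFun (A \ B) + μ.toFun B := by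
    rw [← Set.diff_union_self]
    exact μ.finAdd (hA.diff hB) hB disjoint_sdiff_left
  have h2 : μ.toFun A = μ.toFun (A \ B) + μ.toFun (A ∩ B) := by
    conv_lhs => rw [← Set.diff_union_inter A B]
    exact μ.finAdd (hA.diff hB) (hA.inter hB) Set.disjoint_sdiff_inter
  rw [h1, h2]
  abel

lemma BVMeasure.tv_eq [IsProbabilityMeasure m] (μ : BVMeasure m Ω)
    (hpos : ∀ A : Set Ω, MeasurableSet A → 0 ≤ μ.toFun A)
    {A : Set Ω} (hA : MeasurableSet A) : μ.tv A = μ.toFun A := by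
  classical
  have hub : μ.toFun A ∈ upperBounds (partitionSums m μ.toFun A) := by
    rintro g ⟨B, hBm, hBd, hBU, hBs⟩
    apply hBs.2
    rintro x ⟨n, rfl⟩
    show ∑ i ∈ Finset.range n, |μ.toFun (B i)| ≤ μ.toFun A
    have hsumeq : ∑ i ∈ Finset.range n, |μ.toFun (B i)|
        = μ.toFun (⋃ i ∈ Finset.range n, B i) := by
      rw [μ.toL0Measure.finAddN B hBm hBd n]
      exact Finset.sum_congr rfl fun i _ => aefun_abs_of_nonneg (hpos _ (hBm i))
    rw [hsumeq]
    refine μ.toL0Measure.mono hpos (Finset.measurableSet_biUnion _ fun i _ => hBm i) hA ?_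
    refine Set.iUnion₂_subset fun i _ => ?_
    rw [← hBU]
    exact Set.subset_iUnion B i
  have hmem : μ.toFun A ∈ partitionSums m μ.toFun A := by
    refine ⟨fun n => if n = 0 then A else ∅, ?_, ?_, ?_, ?_⟩
    · intro n; dsimp only; split_ifs; exacts [hA, MeasurableSet.empty]
    · intro i j hij
      simp only [Function.onFun]
      split_ifs <;> simp_all
    · ext x
      simp only [Set.mem_iUnion]
      constructor
      · rintro ⟨n, hn⟩
        split_ifs at hn with h1
        · exact hn
        · exact absurd hn (Set.notMem_empty x)
      · intro h; exact ⟨0, by simp [h]⟩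
    · have hterm : ∀ i : ℕ, |μ.toFun (if i = 0 then A else ∅)|
          = if i = 0 then μ.toFun A else 0 := by
        intro i
        split_ifs with h
        · exact aefun_abs_of_nonneg (hpos A hA)
        · rw [μ.empty', aefun_abs_of_nonneg le_rfl]
      have hpartial : ∀ n : ℕ, ∑ i ∈ Finset.range n, |μ.toFun (if i = 0 then A else ∅)|
          = if n = 0 then 0 else μ.toFun A := by
        intro n
        rw [Finset.sum_congr rfl fun i _ => hterm i]
        cases n with
        | zero => simp
        | succ n =>
          rw [Finset.sum_ite_eq' (Finset.range (n + 1)) 0 (fun _ => μ.toFun A)]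
          simp
      constructor
      · rintro x ⟨n, rfl⟩
        show ∑ i ∈ Finset.range n, |μ.toFun (if i = 0 then A else ∅)| ≤ μ.toFun A
        rw [hpartial n]
        split_ifs
        · exact hpos A hA
        · exact le_rfl
      · intro b hb
        have := hb (Set.mem_range_self 1)
        have this2 : ∑ i ∈ Finset.range 1, |μ.toFun (if i = 0 then A else ∅)| ≤ b := this
        rw [hpartial 1] at this2
        replace this := this2
        simpa using this
  exact (μ.htv A hA).2.unique ⟨hub, fun b hb => hb hmem⟩

end Aux

section Aux2

open MeasureTheory

lemma eq_on_finite_unions {X : Type*} [MeasurableSpace X] {m : Measure X}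
    [IsProbabilityMeasure m] {Ω : Type*} [MeasurableSpace Ω]
    (μ₁ μ₂ : L0Measure m Ω) (𝔅 : Set (Set Ω))
    (h𝔅 : ∀ U ∈ 𝔅, MeasurableSet U)
    (hinter : ∀ U ∈ 𝔅, ∀ V ∈ 𝔅, U ∩ V ∈ 𝔅)
    (heq : ∀ U ∈ 𝔅, μ₁.toFun U = μ₂.toFun U)
    {ι : Type*} (t : Finset ι) :
    ∀ V : ι → Set Ω, (∀ i ∈ t, V i ∈ 𝔅) →
      μ₁.toFun (⋃ i ∈ t, V i) = μ₂.toFun (⋃ i ∈ t, V i) := by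
  classical
  induction t using Finset.induction_on with
  | empty => intro V _; simp [μ₁.empty', μ₂.empty']
  | @insert a s ha ih =>
    intro V hV
    have hVa : V a ∈ 𝔅 := hV a (Finset.mem_insert_self a s)
    have hVs : ∀ i ∈ s, V i ∈ 𝔅 := fun i hi => hV i (Finset.mem_insert_of_mem hi)
    have hSmeas : MeasurableSet (⋃ i ∈ s, V i) :=
      Finset.measurableSet_biUnion _ fun i hi => h𝔅 _ (hVs i hi)
    have hVam : MeasurableSet (V a) := h𝔅 _ hVa
    have e1 := μ₁.inclExcl hVam hSmeas
    have e2 := μ₂.inclExcl hVam hSmeas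
    have hS : μ₁.toFun (⋃ i ∈ s, V i) = μ₂.toFun (⋃ i ∈ s, V i) := ih V hVs
    have hVaeq : μ₁.toFun (V a) = μ₂.toFun (V a) := heq _ hVa
    have hcap : μ₁.toFun (V a ∩ ⋃ i ∈ s, V i) = μ₂.toFun (V a ∩ ⋃ i ∈ s, V i) := by
      have hrw : V a ∩ ⋃ i ∈ s, V i = ⋃ i ∈ s, (V a ∩ V i) := by
        rw [Set.inter_iUnion₂]
      rw [hrw]
      exact ih (fun i => V a ∩ V i) fun i hi => hinter _ hVa _ (hVs i hi)
    rw [Finset.set_biUnion_insert]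
    have : μ₁.toFun (V a ∪ ⋃ i ∈ s, V i) + μ₁.toFun (V a ∩ ⋃ i ∈ s, V i)
        = μ₂.toFun (V a ∪ ⋃ i ∈ s, V i) + μ₁.toFun (V a ∩ ⋃ i ∈ s, V i) := by
      rw [e1, hVaeq, hS, ← e2, hcap]
    exact add_right_cancel this

lemma tv_open_le {X : Type*} [MeasurableSpace X] {m : Measure X} [IsProbabilityMeasure m]
    {Ω : Type*} [TopologicalSpace Ω] [T2Space Ω] [MeasurableSpace Ω] [BorelSpace Ω]
    (μa μb : BVMeasure m Ω)
    (hpa : ∀ A : Set Ω, MeasurableSet A → 0 ≤ μa.toFun A)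
    (hpb : ∀ A : Set Ω, MeasurableSet A → 0 ≤ μb.toFun A)
    (hRa : InnerRegularOnOpens m μa)
    (𝔅 : Set (Set Ω)) (hbasis : TopologicalSpace.IsTopologicalBasis 𝔅)
    (hinter : ∀ U ∈ 𝔅, ∀ V ∈ 𝔅, U ∩ V ∈ 𝔅)
    (heq : ∀ U ∈ 𝔅, μa.toFun U = μb.toFun U)
    {U : Set Ω} (hU : IsOpen U) : μa.tv U ≤ μb.tv U := by
  classical
  have h𝔅 : ∀ V ∈ 𝔅, MeasurableSet V := fun V hV => (hbasis.isOpen hV).measurableSet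
  apply (hRa U hU).2
  rintro g ⟨K, hK, hKU, rfl⟩
  have hx : ∀ x : K, ∃ V ∈ 𝔅, (x : Ω) ∈ V ∧ V ⊆ U := fun x =>
    hbasis.exists_subset_of_mem_open (hKU x.2) hU
  choose W hW𝔅 hWx hWU using hx
  have hcover : K ⊆ ⋃ x : K, W x := fun y hy => Set.mem_iUnion.2 ⟨⟨y, hy⟩, hWx _⟩
  obtain ⟨t, ht⟩ := hK.elim_finite_subcover W (fun x => hbasis.isOpen (hW𝔅 x)) hcover
  have hSmeas : MeasurableSet (⋃ x ∈ t, W x) :=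
    Finset.measurableSet_biUnion _ fun i _ => h𝔅 _ (hW𝔅 i)
  have hKmeas : MeasurableSet K := hK.isClosed.measurableSet
  calc μa.tv K = μa.toFun K := μa.tv_eq hpa hKmeas
    _ ≤ μa.toFun (⋃ x ∈ t, W x) := μa.toL0Measure.mono hpa hKmeas hSmeas ht
    _ = μb.toFun (⋃ x ∈ t, W x) :=
        eq_on_finite_unions μa.toL0Measure μb.toL0Measure 𝔅 h𝔅 hinter heq t W
          (fun i _ => hW𝔅 i)
    _ ≤ μb.toFun U := μb.toL0Measure.mono hpb hSmeas hU.measurableSet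
        (Set.iUnion₂_subset fun i _ => hWU i)
    _ = μb.tv U := (μb.tv_eq hpb hU.measurableSet).symm

end Aux2

/-- Let `Ω` be a Hausdorff space and `μ₁, μ₂` non-negative Radon
`L⁰`-valued measures.  If `𝔅` is a basis of the topology closed under finite intersections
and `μ₁ U = μ₂ U` for all `U ∈ 𝔅`, then `μ₁ = μ₂` (on all Borel sets). -/
theorem statement12 {X : Type*} [MeasurableSpace X] (m : Measure X) [IsProbabilityMeasure m]
    {Ω : Type*} [TopologicalSpace Ω] [T2Space Ω] [MeasurableSpace Ω] [BorelSpace Ω]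
    (μ₁ μ₂ : BVMeasure m Ω)
    (h₁nonneg : ∀ A : Set Ω, MeasurableSet A → 0 ≤ μ₁.toFun A)
    (h₂nonneg : ∀ A : Set Ω, MeasurableSet A → 0 ≤ μ₂.toFun A)
    (h₁Radon : IsRadonL0 m μ₁) (h₂Radon : IsRadonL0 m μ₂)
    (𝔅 : Set (Set Ω)) (hbasis : TopologicalSpace.IsTopologicalBasis 𝔅)
    (hinter : ∀ U ∈ 𝔅, ∀ V ∈ 𝔅, U ∩ V ∈ 𝔅)
    (heq : ∀ U ∈ 𝔅, μ₁.toFun U = μ₂.toFun U) :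
    ∀ A : Set Ω, MeasurableSet A → μ₁.toFun A = μ₂.toFun A := by
  have htvopen : ∀ U : Set Ω, IsOpen U → μ₁.tv U = μ₂.tv U := fun U hU =>
    le_antisymm
      (tv_open_le μ₁ μ₂ h₁nonneg h₂nonneg h₁Radon.1 𝔅 hbasis hinter heq hU)
      (tv_open_le μ₂ μ₁ h₂nonneg h₁nonneg h₂Radon.1 𝔅 hbasis hinter
        (fun V hV => (heq V hV).symm) hU)
  intro A hA
  have hTset : {g | ∃ U : Set Ω, IsOpen U ∧ A ⊆ U ∧ g = μ₁.tv U}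
      = {g | ∃ U : Set Ω, IsOpen U ∧ A ⊆ U ∧ g = μ₂.tv U} := by
    ext g
    constructor
    · rintro ⟨U, hU, hAU, rfl⟩
      exact ⟨U, hU, hAU, htvopen U hU⟩
    · rintro ⟨U, hU, hAU, rfl⟩
      exact ⟨U, hU, hAU, (htvopen U hU).symm⟩
  have g1 := h₁Radon.2 A hA
  rw [hTset] at g1
  have htv : μ₁.tv A = μ₂.tv A := g1.unique (h₂Radon.2 A hA)
  rw [← μ₁.tv_eq h₁nonneg hA, ← μ₂.tv_eq h₂nonneg hA, htv]

end RNMPaper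
end
end

section
/- Let ν : 2^Ω → L^0_+(m) be an outer L^0-valued measure. Define Γ(ν) := {A ⊆ Ω : ν(S ∩ A) + ν(S \ A) ≤ ν(S) for all S ⊆ Ω}. Then Γ(ν) is a σ-algebra on Ω and the restriction of ν to Γ(ν) is a non-negative L^0-valued measure. -/
open Filter Set Topology Function
open MeasureTheory (Measure IsProbabilityMeasure)
open scoped ENNReal

noncomputable section

namespace RNMPaper

variable {X : Type*} [MeasurableSpace X]

/-- `A` is Carathéodory measurable for the outer `L⁰`-valued measure `ν`:
`ν (S ∩ A) + ν (S \ A) ≤ ν S` for every `S ⊆ Ω`.  (Elements of the non-negative extended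
lattice `L̄⁰₊(m)` are represented by `ℝ≥0∞`-valued functions up to `m`-a.e. equality.) -/
def CaratheodoryMeasurable (m : Measure X) {Ω : Type*} (ν : Set Ω → X → ℝ≥0∞)
    (A : Set Ω) : Prop :=
  ∀ S : Set Ω, (fun x => ν (S ∩ A) x + ν (S \ A) x) ≤ᵐ[m] ν S

section aux

variable (m : Measure X) {Ω : Type*} (ν : Set Ω → X → ℝ≥0∞)

lemma cara_empty (h0 : ν ∅ =ᵐ[m] 0) : CaratheodoryMeasurable m ν (∅ : Set Ω) := by
  intro S
  simp only [Set.inter_empty, Set.diff_empty]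
  filter_upwards [h0] with x hx
  simp only [Pi.zero_apply] at hx
  simp [hx]

lemma cara_compl {A : Set Ω} (hA : CaratheodoryMeasurable m ν A) :
    CaratheodoryMeasurable m ν Aᶜ := by
  intro S
  simp only [Set.diff_compl, ← Set.diff_eq]
  filter_upwards [hA S] with x hx
  rw [add_comm]; exact hx

lemma cara_sub2 (h0 : ν ∅ =ᵐ[m] 0)
    (hsub : ∀ A : ℕ → Set Ω, ν (⋃ n, A n) ≤ᵐ[m] fun x => ∑' n, ν (A n) x)
    (A B : Set Ω) : ν (A ∪ B) ≤ᵐ[m] fun x => ν A x + ν B x := by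
  classical
  set f : ℕ → Set Ω := fun n => if n = 0 then A else if n = 1 then B else ∅ with hf
  have hU : (⋃ n, f n) = A ∪ B := by
    apply Set.Subset.antisymm
    · refine Set.iUnion_subset fun n => ?_
      rcases n with _ | _ | n <;> simp [f]
    · intro x hx
      rcases hx with h | h
      · exact Set.mem_iUnion.2 ⟨0, by simp [f, h]⟩
      · exact Set.mem_iUnion.2 ⟨1, by simp [f, h]⟩
  have h1 := hsub f
  rw [hU] at h1
  filter_upwards [h1, h0] with x hx h0x
  simp only [Pi.zero_apply] at h0x
  refine hx.trans ?_
  have h2 : ∀ n ∉ ({0, 1} : Finset ℕ), ν (f n) x = 0 := by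
    intro n hn
    simp only [Finset.mem_insert, Finset.mem_singleton] at hn
    push_neg at hn
    simp [f, hn.1, hn.2, h0x]
  rw [tsum_eq_sum h2]
  simp [f]

lemma cara_union2 (h0 : ν ∅ =ᵐ[m] 0)
    (hmono : ∀ A B : Set Ω, A ⊆ B → ν A ≤ᵐ[m] ν B)
    (hsub : ∀ A : ℕ → Set Ω, ν (⋃ n, A n) ≤ᵐ[m] fun x => ∑' n, ν (A n) x)
    {A B : Set Ω} (hA : CaratheodoryMeasurable m ν A)
    (hB : CaratheodoryMeasurable m ν B) : CaratheodoryMeasurable m ν (A ∪ B) := by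
  intro S
  have hset : S ∩ (A ∪ B) ⊆ (S ∩ A) ∪ ((S \ A) ∩ B) := by
    rintro x ⟨hxS, hxAB⟩
    by_cases hxA : x ∈ A
    · exact Or.inl ⟨hxS, hxA⟩
    · exact Or.inr ⟨⟨hxS, hxA⟩, hxAB.resolve_left hxA⟩
  have hset2 : S \ (A ∪ B) = (S \ A) \ B := (Set.diff_diff).symm
  filter_upwards [hA S, hB (S \ A), cara_sub2 m ν h0 hsub (S ∩ A) ((S \ A) ∩ B),
    hmono _ _ hset] with x hx1 hx2 hx3 hx4
  calc ν (S ∩ (A ∪ B)) x + ν (S \ (A ∪ B)) x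
      ≤ (ν (S ∩ A) x + ν ((S \ A) ∩ B) x) + ν ((S \ A) \ B) x := by
        rw [hset2]; exact add_le_add (hx4.trans hx3) le_rfl
    _ = ν (S ∩ A) x + (ν ((S \ A) ∩ B) x + ν ((S \ A) \ B) x) := add_assoc _ _ _
    _ ≤ ν (S ∩ A) x + ν (S \ A) x := add_le_add le_rfl hx2
    _ ≤ ν S x := hx1

lemma cara_diff (h0 : ν ∅ =ᵐ[m] 0)
    (hmono : ∀ A B : Set Ω, A ⊆ B → ν A ≤ᵐ[m] ν B)
    (hsub : ∀ A : ℕ → Set Ω, ν (⋃ n, A n) ≤ᵐ[m] fun x => ∑' n, ν (A n) x)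
    {A B : Set Ω} (hA : CaratheodoryMeasurable m ν A)
    (hB : CaratheodoryMeasurable m ν B) : CaratheodoryMeasurable m ν (A \ B) := by
  have h : A \ B = (Aᶜ ∪ B)ᶜ := by
    ext x; simp [Set.mem_diff, not_or]
  rw [h]
  exact cara_compl m ν (cara_union2 m ν h0 hmono hsub (cara_compl m ν hA) hB)

/-- Key estimate: for a pairwise disjoint sequence of Carathéodory measurable sets,
`∑' ν (S ∩ A n) + ν (S \ ⋃ A n) ≤ ν S` a.e. -/
lemma cara_key (h0 : ν ∅ =ᵐ[m] 0)
    (hmono : ∀ A B : Set Ω, A ⊆ B → ν A ≤ᵐ[m] ν B)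
    (hsub : ∀ A : ℕ → Set Ω, ν (⋃ n, A n) ≤ᵐ[m] fun x => ∑' n, ν (A n) x)
    (A : ℕ → Set Ω) (hA : ∀ n, CaratheodoryMeasurable m ν (A n))
    (hd : Pairwise (Disjoint on A)) (S : Set Ω) :
    (fun x => (∑' n, ν (S ∩ A n) x) + ν (S \ ⋃ n, A n) x) ≤ᵐ[m] ν S := by
  set U : ℕ → Set Ω := fun n => ⋃ i < n, A i with hUdef
  have hUsucc : ∀ n, U (n + 1) = U n ∪ A n := by
    intro n
    ext x
    simp only [hUdef, Set.mem_iUnion, Set.mem_union, Nat.lt_succ_iff_lt_or_eq]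
    constructor
    · rintro ⟨i, hi | rfl, hx⟩
      · exact Or.inl ⟨i, hi, hx⟩
      · exact Or.inr hx
    · rintro (⟨i, hi, hx⟩ | hx)
      · exact ⟨i, Or.inl hi, hx⟩
      · exact ⟨n, Or.inr rfl, hx⟩
  have hU0 : U 0 = ∅ := by simp [hUdef]
  have hUmeas : ∀ n, CaratheodoryMeasurable m ν (U n) := by
    intro n
    induction n with
    | zero => rw [hU0]; exact cara_empty m ν h0
    | succ n ih => rw [hUsucc]; exact cara_union2 m ν h0 hmono hsub ih (hA n)
  have hUdisj : ∀ n, U n ∩ A n = ∅ := by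
    intro n
    ext x
    simp only [hUdef, Set.mem_inter_iff, Set.mem_iUnion, Set.mem_empty_iff_false, iff_false]
    rintro ⟨⟨i, hi, hxi⟩, hxn⟩
    exact (hd (ne_of_lt hi)).le_bot ⟨hxi, hxn⟩
  have hUsub : ∀ n, U n ⊆ ⋃ k, A k := by
    intro n x hx
    simp only [hUdef, Set.mem_iUnion] at hx
    exact Set.mem_iUnion.2 ⟨hx.choose, hx.choose_spec.2⟩
  have inner : ∀ n, (fun x => ∑ i ∈ Finset.range n, ν (S ∩ A i) x) ≤ᵐ[m]
      ν (S ∩ U n) := by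
    intro n
    induction n with
    | zero =>
      refine Filter.Eventually.of_forall fun x => ?_
      simp
    | succ n ih =>
      have h1 := hA n (S ∩ U (n + 1))
      have e1 : S ∩ U (n + 1) ∩ A n = S ∩ A n := by
        rw [hUsucc]
        ext x
        simp only [Set.mem_inter_iff, Set.mem_union]
        constructor
        · rintro ⟨⟨h1, _⟩, h3⟩; exact ⟨h1, h3⟩
        · rintro ⟨h1, h2⟩; exact ⟨⟨h1, Or.inr h2⟩, h2⟩
      have e2 : (S ∩ U (n + 1)) \ A n = S ∩ U n := by
        rw [hUsucc]
        ext x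
        simp only [Set.mem_diff, Set.mem_inter_iff, Set.mem_union]
        constructor
        · rintro ⟨⟨h1, h2 | h2⟩, h3⟩
          · exact ⟨h1, h2⟩
          · exact absurd h2 h3
        · rintro ⟨h1, h2⟩
          refine ⟨⟨h1, Or.inl h2⟩, fun hxn => ?_⟩
          have h4 : x ∈ U n ∩ A n := ⟨h2, hxn⟩
          rw [hUdisj n] at h4
          exact h4
      rw [e1, e2] at h1
      filter_upwards [h1, ih] with x hx hix
      rw [Finset.sum_range_succ]
      calc (∑ i ∈ Finset.range n, ν (S ∩ A i) x) + ν (S ∩ A n) x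
          ≤ ν (S ∩ U n) x + ν (S ∩ A n) x := add_le_add hix le_rfl
        _ = ν (S ∩ A n) x + ν (S ∩ U n) x := add_comm _ _
        _ ≤ ν (S ∩ U (n + 1)) x := hx
  have claim : ∀ n, (fun x => (∑ i ∈ Finset.range n, ν (S ∩ A i) x) +
      ν (S \ ⋃ k, A k) x) ≤ᵐ[m] ν S := by
    intro n
    have hd1 : S \ ⋃ k, A k ⊆ S \ U n := Set.diff_subset_diff_right (hUsub n)
    filter_upwards [inner n, hUmeas n S, hmono _ _ hd1] with x h1 h2 h3
    calc (∑ i ∈ Finset.range n, ν (S ∩ A i) x) + ν (S \ ⋃ k, A k) x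
        ≤ ν (S ∩ U n) x + ν (S \ U n) x := add_le_add h1 h3
      _ ≤ ν S x := h2
  have hall := (MeasureTheory.ae_all_iff).2 claim
  filter_upwards [hall] with x hx
  rw [ENNReal.tsum_eq_iSup_nat, ENNReal.iSup_add]
  exact iSup_le fun n => hx n

/-- A countable disjoint union of Carathéodory measurable sets is Carathéodory measurable. -/
lemma cara_disjoint_iUnion (h0 : ν ∅ =ᵐ[m] 0)
    (hmono : ∀ A B : Set Ω, A ⊆ B → ν A ≤ᵐ[m] ν B)
    (hsub : ∀ A : ℕ → Set Ω, ν (⋃ n, A n) ≤ᵐ[m] fun x => ∑' n, ν (A n) x)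
    (A : ℕ → Set Ω) (hA : ∀ n, CaratheodoryMeasurable m ν (A n))
    (hd : Pairwise (Disjoint on A)) :
    CaratheodoryMeasurable m ν (⋃ n, A n) := by
  intro S
  have h1 := cara_key m ν h0 hmono hsub A hA hd S
  have h2 := hsub fun n => S ∩ A n
  rw [← Set.inter_iUnion] at h2
  filter_upwards [h1, h2] with x hx1 hx2
  calc ν (S ∩ ⋃ n, A n) x + ν (S \ ⋃ n, A n) x
      ≤ (∑' n, ν (S ∩ A n) x) + ν (S \ ⋃ n, A n) x := add_le_add hx2 le_rfl
    _ ≤ ν S x := hx1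

end aux

/-- **Carathéodory.** Let `ν` be an outer `L⁰`-valued measure on `Ω`
(`ν ∅ = 0`, monotone, countably subadditive, with values in `L⁰₊(m)`, i.e. a.e. finite).
Then the family `Γ(ν)` of Carathéodory `ν`-measurable sets is a σ-algebra on `Ω`, and the
restriction of `ν` to `Γ(ν)` is a non-negative (countably additive) `L⁰`-valued measure. -/
theorem statement14 (m : Measure X) [IsProbabilityMeasure m] {Ω : Type*}
    (ν : Set Ω → X → ℝ≥0∞)
    (h0 : ν ∅ =ᵐ[m] 0)
    (hmono : ∀ A B : Set Ω, A ⊆ B → ν A ≤ᵐ[m] ν B)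
    (hsub : ∀ A : ℕ → Set Ω, ν (⋃ n, A n) ≤ᵐ[m] fun x => ∑' n, ν (A n) x)
    (hfin : ∀ S : Set Ω, ∀ᵐ x ∂m, ν S x ≠ ∞) :
    (∃ σ : MeasurableSpace Ω, ∀ A : Set Ω,
      @MeasurableSet Ω σ A ↔ CaratheodoryMeasurable m ν A) ∧
    (∀ A : ℕ → Set Ω, (∀ n, CaratheodoryMeasurable m ν (A n)) →
      Pairwise (Disjoint on A) →
      ν (⋃ n, A n) =ᵐ[m] fun x => ∑' n, ν (A n) x) := by
  constructor
  · -- σ-algebra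
    have hiUnion : ∀ f : ℕ → Set Ω, (∀ n, CaratheodoryMeasurable m ν (f n)) →
        CaratheodoryMeasurable m ν (⋃ n, f n) := by
      intro f hf
      rw [← iUnion_disjointed]
      have hps : ∀ n, CaratheodoryMeasurable m ν (partialSups f n) := by
        intro n
        induction n with
        | zero => simpa using hf 0
        | succ n ih =>
          rw [partialSups_add_one]
          exact cara_union2 m ν h0 hmono hsub ih (hf (n + 1))
      have hdis : ∀ n, CaratheodoryMeasurable m ν (disjointed f n) := by
        intro n
        cases n with
        | zero => simpa [disjointed_zero] using hf 0
        | succ n =>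
          rw [disjointed_add_one]
          exact cara_diff m ν h0 hmono hsub (hf (n + 1)) (hps n)
      exact cara_disjoint_iUnion m ν h0 hmono hsub _ hdis (disjoint_disjointed f)
    exact ⟨⟨CaratheodoryMeasurable m ν, cara_empty m ν h0,
      fun A hA => cara_compl m ν hA, hiUnion⟩, fun A => Iff.rfl⟩
  · -- countable additivity
    intro A hA hd
    refine Filter.EventuallyLE.antisymm (hsub A) ?_
    have h1 := cara_key m ν h0 hmono hsub A hA hd (⋃ n, A n)
    have e1 : ∀ n, (⋃ k, A k) ∩ A n = A n := fun n =>
      Set.inter_eq_right.2 (Set.subset_iUnion A n)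
    have e2 : (⋃ k, A k) \ ⋃ n, A n = ∅ := Set.diff_self
    filter_upwards [h1, h0] with x hx h0x
    simp only [Pi.zero_apply] at h0x
    have : (∑' n, ν ((⋃ k, A k) ∩ A n) x) + ν ((⋃ k, A k) \ ⋃ n, A n) x
        = ∑' n, ν (A n) x := by
      rw [e2, h0x, add_zero]
      congr 1
      ext n
      rw [e1]
    rw [this] at hx
    exact hx
end RNMPaper
end
end
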